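/- The counterflow effectiveness ε(NTU, C*) = (1 - exp(-NTU(1 - C*)))/(1 - C* exp(-NTU(1 - C*))) is strictly decreasing in C* on (0,1) for any fixed NTU > 0. -/

import Mathlib

/-!
Put `a = NTU (1 - C*)`. Multiplying through by `exp a` and dividing by `a / NTU = 1 - C*` gives
`ε = s / (s + NTU⁻¹)` with `s = (exp a - 1) / a`, the slope of the secant of `exp` from `0`.
By strict convexity of `exp` this slope increases with `a`, and `a` decreases as `C*` increases.
-/

open Real Set

lemma strictMonoOn_exp_sub_one_div : StrictMonoOn (fun x : ℝ => (exp x - 1) / x) {0}ᶜ := by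
  intro x hx y hy hxy
  simpa using strictConvexOn_exp.secant_strict_mono (mem_univ 0) (mem_univ x) (mem_univ y) hx hy hxy

lemma exp_sub_one_div_pos {x : ℝ} (hx : 0 < x) : 0 < (exp x - 1) / x :=
  div_pos (by linarith [add_one_lt_exp hx.ne']) hx

lemma strictMonoOn_div_add {k : ℝ} (hk : 0 < k) : StrictMonoOn (fun x : ℝ => x / (x + k)) (Ioi (-k)) := by
  intro x hx y hy hxy
  have hx' : 0 < x + k := by linarith [mem_Ioi.mp hx]
  have hy' : 0 < y + k := by linarith [mem_Ioi.mp hy]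
  rw [div_lt_div_iff₀ hx' hy']
  nlinarith

lemma one_sub_exp_neg_div_eq_slope_div {N c : ℝ} (hN : 0 < N) (hc : c < 1) :
    (1 - exp (-N * (1 - c))) / (1 - c * exp (-N * (1 - c))) =
      (exp (N * (1 - c)) - 1) / (N * (1 - c)) /
        ((exp (N * (1 - c)) - 1) / (N * (1 - c)) + N⁻¹) := by
  have hc' : 0 < 1 - c := by linarith
  have he : 1 < exp (N * (1 - c)) := one_lt_exp_iff.mpr (mul_pos hN hc')
  rw [neg_mul, exp_neg]
  generalize exp (N * (1 - c)) = e at *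
  have hec : e - c ≠ 0 := by linarith
  have hsplit : e - 1 + (1 - c) = e - c := by ring
  field_simp
  rw [hsplit]
  field_simp

theorem counterflow_effectiveness_strictAnti_in_Cstar
    (NTU : ℝ) (hN : 0 < NTU) :
    StrictAntiOn
      (fun Cstar : ℝ =>
        (1 - Real.exp (-NTU * (1 - Cstar))) /
          (1 - Cstar * Real.exp (-NTU * (1 - Cstar))))
      (Set.Ioo (0 : ℝ) 1) := by
  have hpos : MapsTo (fun c : ℝ => NTU * (1 - c)) (Ioo 0 1) (Ioi 0) :=
    fun c hc => mul_pos hN (sub_pos.mpr hc.2)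
  have hanti : StrictAntiOn (fun c : ℝ => NTU * (1 - c)) (Ioo 0 1) :=
    fun x _ y _ hxy => by nlinarith
  have hslope : StrictAntiOn (fun c : ℝ => (exp (NTU * (1 - c)) - 1) / (NTU * (1 - c))) (Ioo 0 1) :=
    (strictMonoOn_exp_sub_one_div.mono fun x hx => ne_of_gt hx).comp_strictAntiOn hanti hpos
  have hratio := (strictMonoOn_div_add (inv_pos.mpr hN)).comp_strictAntiOn hslope
    fun c hc => (neg_neg_of_pos (inv_pos.mpr hN)).trans (exp_sub_one_div_pos (hpos hc))
  exact hratio.congr fun c hc => (one_sub_exp_neg_div_eq_slope_div hN hc.2).symm
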